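/- Let Q be a directed line segment in R with Q(0) ≤ Q(1), and let P : [0,1] → R be a continuous curve. Then d_F(P,Q) ≤ δ if and only if (i) P is 2δ-monotone increasing, i.e. for all s < t in [0,1], P(t) ≥ P(s) − 2δ; (ii) |P(0) − Q(0)| ≤ δ and |P(1) − Q(1)| ≤ δ; and (iii) every point of P lies within distance δ of some point of Q, i.e. P([0,1]) ⊆ [Q(0) − δ, Q(1) + δ]. -/

import Mathlib

/-!
If `(f, g)` traverses `P` and the segment at width `r`, the segment is run through monotonically,
so a later point of `P` cannot lie more than `2r` below an earlier one; the endpoints are matched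
to each other, and every point of `P` is matched to a point of `[a, b]`.

Conversely, the running maximum of `P` minus `δ` and the minimum of the rest of `P` plus `δ`,
both clamped to `[a, b]`, are monotone envelopes `L ≤ U` within `δ` of `P` (this is where
`2δ`-monotonicity enters), with `L 0 = a` and `U 1 = b`. A monotone path from `a` to `b` clamped
between them is a reparametrization of the segment that stays within `δ` of `P` pointwise.
-/

/-- Continuous Fréchet distance between curves on the unit interval. -/
noncomputable def frechetDist {E : Type*} [PseudoMetricSpace E] (P Q : unitInterval → E) : ℝ :=
  sInf {r : ℝ | ∃ f g : unitInterval → unitInterval,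
    Continuous f ∧ Monotone f ∧ Function.Surjective f ∧
    Continuous g ∧ Monotone g ∧ Function.Surjective g ∧
    ∀ t, dist (P (f t)) (Q (g t)) ≤ r}

/-- The directed line segment from `a` to `b`, parametrized linearly. -/
noncomputable def segCurve {E : Type*} [AddCommGroup E] [Module ℝ E] (a b : E) :
    unitInterval → E :=
  fun t => (1 - (t : ℝ)) • a + (t : ℝ) • b

/-- The polygonal curve with `n+1` vertices `p 0, …, p n`, parametrized uniformly. -/
noncomputable def polyCurve {E : Type*} [AddCommGroup E] [Module ℝ E]
    (n : ℕ) (p : Fin (n + 1) → E) (t : unitInterval) : E :=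
  let x : ℝ := (t : ℝ) * n
  let i : ℕ := min (Nat.floor x) (n - 1)
  (1 - (x - (i : ℝ))) • p ⟨min i n, Nat.lt_succ_of_le (min_le_right i n)⟩ +
    (x - (i : ℝ)) • p ⟨min (i + 1) n, Nat.lt_succ_of_le (min_le_right (i + 1) n)⟩

/-- The subcurve `Q[a,b]`, linearly reparametrized over the unit interval. -/
noncomputable def subcurve {E : Type*} (Q : unitInterval → E) (a b : unitInterval) :
    unitInterval → E :=
  fun s => Q ⟨(1 - (s : ℝ)) * (a : ℝ) + (s : ℝ) * (b : ℝ), Set.mem_Icc.mpr ⟨by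
      have hs0 := unitInterval.nonneg s; have hs1 := unitInterval.le_one s
      have ha0 := unitInterval.nonneg a; have hb0 := unitInterval.nonneg b
      have h1 : (0:ℝ) ≤ (1 - (s:ℝ)) * (a:ℝ) := mul_nonneg (by linarith) ha0
      have h2 : (0:ℝ) ≤ (s:ℝ) * (b:ℝ) := mul_nonneg hs0 hb0
      linarith, by
      have hs0 := unitInterval.nonneg s; have hs1 := unitInterval.le_one s
      have ha1 := unitInterval.le_one a; have hb1 := unitInterval.le_one b
      have h1 : (1 - (s:ℝ)) * (a:ℝ) ≤ (1 - (s:ℝ)) * 1 :=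
        mul_le_mul_of_nonneg_left ha1 (by linarith)
      have h2 : (s:ℝ) * (b:ℝ) ≤ (s:ℝ) * 1 := mul_le_mul_of_nonneg_left hb1 hs0
      linarith⟩⟩

/-- The parameter (in the uniform parametrization) of the `i`-th vertex of a
polygonal curve with `n` edges. -/
noncomputable def vparam (n : ℕ) (i : Fin (n + 1)) : unitInterval :=
  ⟨((i : ℕ) : ℝ) / (n : ℝ), Set.mem_Icc.mpr ⟨by positivity, by
    have h1 : ((i : ℕ) : ℝ) ≤ (n : ℝ) := by exact_mod_cast Nat.lt_succ_iff.mp i.isLt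
    rcases Nat.eq_zero_or_pos n with h | h
    · subst h; simp
    · rw [div_le_one (by exact_mod_cast h)]; exact h1⟩⟩

/-- `P` is `c`-monotone increasing. -/
def ApproxInc (c : ℝ) (P : unitInterval → ℝ) : Prop :=
  ∀ s t : unitInterval, s ≤ t → P s - c ≤ P t

/-- `P` is `c`-monotone decreasing. -/
def ApproxDec (c : ℝ) (P : unitInterval → ℝ) : Prop :=
  ∀ s t : unitInterval, s ≤ t → P t ≤ P s + c

/-- `P` is `c`-monotone. -/
def ApproxMono (c : ℝ) (P : unitInterval → ℝ) : Prop :=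
  ApproxInc c P ∨ ApproxDec c P

/-- Concatenation of two curves (first on `[0,1/2]`, second on `[1/2,1]`). -/
noncomputable def concatC {E : Type*} (P Q : unitInterval → E) : unitInterval → E :=
  fun t =>
    if h : (t : ℝ) ≤ 1 / 2 then
      P ⟨2 * (t : ℝ), Set.mem_Icc.mpr ⟨by have := unitInterval.nonneg t; linarith,
        by linarith⟩⟩
    else
      Q ⟨2 * (t : ℝ) - 1, Set.mem_Icc.mpr ⟨by push_neg at h; linarith,
        by have := unitInterval.le_one t; linarith⟩⟩

/-- The data of a `δ`-straightening of the curve `Q`: parameters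
`0 = t 0 < … < t (Fin.last ℓ) = 1` such that each shortcut segment is within
Fréchet distance `δ` of the corresponding subcurve (locality), and each
corresponding subcurve stays in the closed interval spanned by the shortcut's
endpoints (edge-range-preserving). -/
def StraighteningData (δ : ℝ) (Q : unitInterval → ℝ) (ℓ : ℕ)
    (t : Fin (ℓ + 1) → unitInterval) : Prop :=
  StrictMono t ∧ t 0 = 0 ∧ t (Fin.last ℓ) = 1 ∧
    ∀ i : Fin ℓ,
      frechetDist (segCurve (Q (t i.castSucc)) (Q (t i.succ)))
          (subcurve Q (t i.castSucc) (t i.succ)) ≤ δ ∧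
      ∀ s : unitInterval, t i.castSucc ≤ s → s ≤ t i.succ →
        Q s ∈ Set.uIcc (Q (t i.castSucc)) (Q (t i.succ))

/-- `Q'` is a `δ`-straightening of `Q`. -/
def IsStraightening (δ : ℝ) (Q Q' : unitInterval → ℝ) : Prop :=
  ∃ (ℓ : ℕ) (t : Fin (ℓ + 1) → unitInterval),
    StraighteningData δ Q ℓ t ∧ Q' = polyCurve ℓ (fun i => Q (t i))

/-- The data of a `δ`-signature of the curve `Q`: parameters
`0 = t 0 < … < t (Fin.last ℓ) = 1` with the locality property, non-degenerate
vertex-range-preserving interior vertices, and the `δ`-edge-length property. -/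
def SignatureData (δ : ℝ) (Q : unitInterval → ℝ) (ℓ : ℕ)
    (t : Fin (ℓ + 1) → unitInterval) : Prop :=
  StrictMono t ∧ t 0 = 0 ∧ t (Fin.last ℓ) = 1 ∧
    (∀ i : Fin ℓ,
      frechetDist (segCurve (Q (t i.castSucc)) (Q (t i.succ)))
          (subcurve Q (t i.castSucc) (t i.succ)) ≤ δ) ∧
    (∀ i : ℕ, ∀ _h1 : 0 < i, ∀ _h2 : i < ℓ,
      (Q (t ⟨i - 1, by omega⟩) < Q (t ⟨i, by omega⟩) ∧
        Q (t ⟨i + 1, by omega⟩) < Q (t ⟨i, by omega⟩) ∧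
        ∀ s : unitInterval, t ⟨i - 1, by omega⟩ ≤ s → s ≤ t ⟨i + 1, by omega⟩ →
          Q s ≤ Q (t ⟨i, by omega⟩)) ∨
      (Q (t ⟨i, by omega⟩) < Q (t ⟨i - 1, by omega⟩) ∧
        Q (t ⟨i, by omega⟩) < Q (t ⟨i + 1, by omega⟩) ∧
        ∀ s : unitInterval, t ⟨i - 1, by omega⟩ ≤ s → s ≤ t ⟨i + 1, by omega⟩ →
          Q (t ⟨i, by omega⟩) ≤ Q s)) ∧
    (∀ _h : 1 ≤ ℓ,
      δ < |Q (t ⟨1, by omega⟩) - Q (t 0)| ∧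
      δ < |Q (t (Fin.last ℓ)) - Q (t ⟨ℓ - 1, by omega⟩)|) ∧
    (∀ j : ℕ, ∀ _hj1 : 1 ≤ j, ∀ _hj2 : j + 2 ≤ ℓ,
      2 * δ < |Q (t ⟨j + 1, by omega⟩) - Q (t ⟨j, by omega⟩)|)

/-- `Q'` is a `δ`-signature of `Q`. -/
def IsSignature (δ : ℝ) (Q Q' : unitInterval → ℝ) : Prop :=
  ∃ (ℓ : ℕ) (t : Fin (ℓ + 1) → unitInterval),
    SignatureData δ Q ℓ t ∧ Q' = polyCurve ℓ (fun i => Q (t i))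

/-- Vertex `j` of the polygonal curve on `q` `δ`-visits vertex `a` of the
polygonal curve on `p` under the monotone traversal `(f, g)`: they are within
distance `δ`, and the traversal matches one of them to the other vertex or to the
interior of an edge incident to it. -/
def Visits (δ : ℝ) (m k : ℕ) (p : Fin (m + 1) → ℝ) (q : Fin (k + 1) → ℝ)
    (f g : unitInterval → unitInterval) (j : Fin (k + 1)) (a : Fin (m + 1)) : Prop :=
  |q j - p a| ≤ δ ∧
    ((∃ t : unitInterval, g t = vparam k j ∧ |(f t : ℝ) * (m : ℝ) - ((a : ℕ) : ℝ)| < 1) ∨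
     (∃ t : unitInterval, f t = vparam m a ∧ |(g t : ℝ) * (k : ℝ) - ((j : ℕ) : ℝ)| < 1))

open Set Function unitInterval

section Envelopes

variable {α β : Type*} [ConditionallyCompleteLinearOrder α] [LinearOrder β] {P : β → α}

def prefixSup (P : β → α) (u : β) : α := ⨆ s, P (min s u)

def suffixInf (P : β → α) (u : β) : α := ⨅ s, P (max s u)

lemma prefixSup_le {u : β} {c : α} (h : ∀ s ≤ u, P s ≤ c) : prefixSup P u ≤ c :=
  have : Nonempty β := ⟨u⟩
  ciSup_le fun s => h _ (min_le_right s u)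

lemma le_suffixInf {u : β} {c : α} (h : ∀ s, u ≤ s → c ≤ P s) : c ≤ suffixInf P u :=
  prefixSup_le (α := αᵒᵈ) (β := βᵒᵈ) h

variable [TopologicalSpace α] [OrderTopology α] [TopologicalSpace β] [CompactSpace β]

lemma le_prefixSup (hP : Continuous P) (u : β) : P u ≤ prefixSup P u :=
  le_ciSup_of_le ((isCompact_range hP).bddAbove.mono (range_comp_subset_range _ P)) u
    (by rw [min_self])

lemma monotone_prefixSup (hP : Continuous P) : Monotone (prefixSup P) := fun _ v huv =>
  prefixSup_le fun s hs =>
    le_ciSup_of_le ((isCompact_range hP).bddAbove.mono (range_comp_subset_range _ P)) s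
      (by rw [min_eq_left (hs.trans huv)])

lemma suffixInf_le (hP : Continuous P) (u : β) : suffixInf P u ≤ P u :=
  have : CompactSpace βᵒᵈ := ‹CompactSpace β›
  le_prefixSup (α := αᵒᵈ) (β := βᵒᵈ) hP u

lemma monotone_suffixInf (hP : Continuous P) : Monotone (suffixInf P) :=
  have : CompactSpace βᵒᵈ := ‹CompactSpace β›
  fun _ _ huv => monotone_prefixSup (α := αᵒᵈ) (β := βᵒᵈ) hP huv

variable [OrderClosedTopology β]

lemma continuous_prefixSup (hP : Continuous P) : Continuous (prefixSup P) := by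
  have := isCompact_univ.continuous_sSup (f := fun u s => P (min s u))
    (hP.comp (continuous_snd.min continuous_fst))
  simp only [image_univ] at this
  exact this

lemma continuous_suffixInf (hP : Continuous P) : Continuous (suffixInf P) :=
  have : CompactSpace βᵒᵈ := ‹CompactSpace β›
  continuous_prefixSup (α := αᵒᵈ) (β := βᵒᵈ) hP

end Envelopes

namespace ApproxInc

variable {c : ℝ} {P : I → ℝ}

lemma prefixSup_le_add (h : ApproxInc c P) (u : I) : prefixSup P u ≤ P u + c :=
  prefixSup_le fun s hs => by linarith [h s u hs]

lemma le_suffixInf_add (h : ApproxInc c P) (u : I) : P u ≤ suffixInf P u + c := by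
  linarith [le_suffixInf (P := P) (c := P u - c) fun t ht => h u t ht]

lemma prefixSup_le_suffixInf_add (h : ApproxInc c P) (u : I) :
    prefixSup P u ≤ suffixInf P u + c :=
  prefixSup_le fun s hs => by
    linarith [le_suffixInf (P := P) (c := P s - c) fun t ht => h s t (hs.trans ht)]

end ApproxInc

lemma abs_sub_max_min_le {a b x y δ : ℝ} (hy : y ∈ Icc (a - δ) (b + δ)) (hxy : |y - x| ≤ δ) :
    |y - max a (min b x)| ≤ δ := by
  rw [abs_le] at hxy ⊢
  have hle : max a (min b x) ≤ y + δ :=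
    max_le (by linarith [hy.1]) ((min_le_right b x).trans (by linarith))
  have hge : y - δ ≤ max a (min b x) :=
    le_max_of_le_right (le_min (by linarith [hy.2]) (by linarith))
  constructor <;> linarith

namespace unitInterval

lemma map_zero_of_monotone_of_surjective {f : I → I} (hm : Monotone f) (hs : Surjective f) :
    f 0 = 0 := by
  obtain ⟨u, hu⟩ := hs 0
  exact le_antisymm ((hm (nonneg' (t := u))).trans_eq hu) nonneg'

lemma map_one_of_monotone_of_surjective {f : I → I} (hm : Monotone f) (hs : Surjective f) :
    f 1 = 1 := by
  obtain ⟨u, hu⟩ := hs 1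
  exact le_antisymm le_one' (hu.symm.trans_le (hm (le_one' (t := u))))

lemma surjective_of_continuous {f : I → I} (hc : Continuous f) (h0 : f 0 = 0) (h1 : f 1 = 1) :
    Surjective f := fun y =>
  intermediate_value_univ 0 1 hc (by rw [h0, h1]; exact ⟨nonneg', le_one'⟩)

end unitInterval

section Segment

variable {a b : ℝ}

lemma segCurve_apply (a b : ℝ) (t : I) : segCurve a b t = (1 - (t : ℝ)) * a + t * b := by
  simp [segCurve]

@[simp] lemma segCurve_zero (a b : ℝ) : segCurve a b 0 = a := by simp [segCurve_apply]

@[simp] lemma segCurve_one (a b : ℝ) : segCurve a b 1 = b := by simp [segCurve_apply]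

lemma continuous_segCurve (a b : ℝ) : Continuous (segCurve a b) := by
  unfold segCurve; fun_prop

lemma segCurve_mem_Icc (hab : a ≤ b) (t : I) : segCurve a b t ∈ Icc a b := by
  rw [segCurve_apply]
  constructor <;> nlinarith [t.2.1, t.2.2]

lemma monotone_segCurve (hab : a ≤ b) : Monotone (segCurve a b) := fun u v huv => by
  rw [segCurve_apply, segCurve_apply]
  nlinarith [Subtype.coe_le_coe.mpr huv]

lemma exists_reparam_segCurve_eq {h : I → ℝ} (hc : Continuous h) (hm : Monotone h)
    (h0 : h 0 = a) (h1 : h 1 = b) :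
    ∃ g : I → I, Continuous g ∧ Monotone g ∧ Surjective g ∧ ∀ t, segCurve a b (g t) = h t := by
  have hmem (t : I) : h t ∈ Icc a b := h0 ▸ h1 ▸ ⟨hm nonneg', hm le_one'⟩
  rcases (h0 ▸ h1 ▸ hm (zero_le_one' I) : a ≤ b).eq_or_lt with rfl | hab
  · refine ⟨id, continuous_id, monotone_id, surjective_id, fun t => ?_⟩
    rw [segCurve_apply, id, le_antisymm (hmem t).2 (hmem t).1]
    ring
  set g : I → I := fun t =>
    ⟨(h t - a) / (b - a),
      div_mem (by linarith [(hmem t).1]) (by linarith) (by linarith [(hmem t).2])⟩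
  have hg0 : g 0 = 0 := by ext; simp [g, h0]
  have hg1 : g 1 = 1 := by ext; simp [g, h1, (sub_pos.mpr hab).ne']
  have hgc : Continuous g := by fun_prop
  refine ⟨g, hgc, fun u v huv => ?_, surjective_of_continuous hgc hg0 hg1, fun t => ?_⟩
  · show (h u - a) / (b - a) ≤ (h v - a) / (b - a)
    exact div_le_div_of_nonneg_right (by linarith [hm huv]) (by linarith)
  · rw [segCurve_apply]
    simp only [g]
    field_simp
    ring

end Segment

section Frechet

variable {E : Type*} [PseudoMetricSpace E] {P Q : I → E} {r : ℝ}

lemma frechetDist_le_of_forall_dist_le {f g : I → I} (hfc : Continuous f) (hfm : Monotone f)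
    (hfs : Surjective f) (hgc : Continuous g) (hgm : Monotone g) (hgs : Surjective g)
    (h : ∀ t, dist (P (f t)) (Q (g t)) ≤ r) : frechetDist P Q ≤ r := by
  unfold frechetDist
  exact csInf_le ⟨0, fun _ ⟨_, _, _, _, _, _, _, _, hb⟩ => dist_nonneg.trans (hb 0)⟩
    ⟨f, g, hfc, hfm, hfs, hgc, hgm, hgs, h⟩

lemma exists_forall_dist_lt_of_frechetDist_lt (hP : Continuous P) (hQ : Continuous Q)
    (h : frechetDist P Q < r) :
    ∃ f g : I → I, Monotone f ∧ Surjective f ∧ Monotone g ∧ Surjective g ∧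
      ∀ t, dist (P (f t)) (Q (g t)) < r := by
  obtain ⟨c, hc⟩ := (isCompact_range (hP.dist hQ)).bddAbove
  unfold frechetDist at h
  refine (exists_lt_of_csInf_lt ?_ h).elim fun _ ⟨⟨f, g, _, hfm, hfs, _, hgm, hgs, hb⟩, hr⟩ =>
    ⟨f, g, hfm, hfs, hgm, hgs, fun t => (hb t).trans_lt hr⟩
  exact ⟨c, id, id, continuous_id, monotone_id, surjective_id, continuous_id, monotone_id,
    surjective_id, fun t => hc ⟨t, rfl⟩⟩

end Frechet

def FitsSegment (δ a b : ℝ) (P : I → ℝ) : Prop :=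
  ApproxInc (2 * δ) P ∧ |P 0 - a| ≤ δ ∧ |P 1 - b| ≤ δ ∧ ∀ t : I, P t ∈ Icc (a - δ) (b + δ)

namespace FitsSegment

variable {δ a b : ℝ} {P : I → ℝ}

lemma of_forall_lt (h : ∀ r, δ < r → FitsSegment r a b P) : FitsSegment δ a b P := by
  refine ⟨fun s t hst => ?_, le_of_forall_gt_imp_ge_of_dense fun r hr => (h r hr).2.1,
    le_of_forall_gt_imp_ge_of_dense fun r hr => (h r hr).2.2.1, fun t => ⟨?_, ?_⟩⟩
  · have : (P s - P t) / 2 ≤ δ := le_of_forall_gt_imp_ge_of_dense fun r hr => by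
      linarith [(h r hr).1 s t hst]
    linarith
  · have : a - P t ≤ δ := le_of_forall_gt_imp_ge_of_dense fun r hr => by
      linarith [((h r hr).2.2.2 t).1]
    linarith
  · have : P t - b ≤ δ := le_of_forall_gt_imp_ge_of_dense fun r hr => by
      linarith [((h r hr).2.2.2 t).2]
    linarith

lemma of_forall_dist_le (hab : a ≤ b) {f g : I → I} (hfm : Monotone f) (hfs : Surjective f)
    (hgm : Monotone g) (hgs : Surjective g) (h : ∀ t, dist (P (f t)) (segCurve a b (g t)) ≤ δ) :
    FitsSegment δ a b P := by
  simp only [Real.dist_eq, abs_le] at h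
  refine ⟨fun s t hst => ?_, ?_, ?_, fun t => ?_⟩
  · obtain ⟨u, rfl⟩ := hfs s
    obtain ⟨v, rfl⟩ := hfs t
    rcases le_total u v with huv | hvu
    · linarith [(h u).2, (h v).1, monotone_segCurve hab (hgm huv)]
    · rw [le_antisymm hst (hfm hvu)]
      linarith [h v]
  · have h0 := h 0
    rw [map_zero_of_monotone_of_surjective hfm hfs, map_zero_of_monotone_of_surjective hgm hgs,
      segCurve_zero] at h0
    exact abs_le.mpr h0
  · have h1 := h 1
    rw [map_one_of_monotone_of_surjective hfm hfs, map_one_of_monotone_of_surjective hgm hgs,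
      segCurve_one] at h1
    exact abs_le.mpr h1
  · obtain ⟨u, rfl⟩ := hfs t
    have := segCurve_mem_Icc hab (g u)
    constructor <;> linarith [h u, this.1, this.2]

lemma exists_monotone_dist_le (hfit : FitsSegment δ a b P) (hP : Continuous P) (hab : a ≤ b) :
    ∃ h : I → ℝ, Continuous h ∧ Monotone h ∧ h 0 = a ∧ h 1 = b ∧ ∀ u, dist (P u) (h u) ≤ δ := by
  obtain ⟨hinc, h0, h1, hrange⟩ := hfit
  set L : I → ℝ := fun u => max a (min b (prefixSup P u - δ))
  set U : I → ℝ := fun u => max a (min b (suffixInf P u + δ))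
  have hLc : Continuous L :=
    continuous_const.max (continuous_const.min ((continuous_prefixSup hP).sub continuous_const))
  have hUc : Continuous U :=
    continuous_const.max (continuous_const.min ((continuous_suffixInf hP).add continuous_const))
  have hLm : Monotone L := fun u v huv =>
    max_le_max le_rfl (min_le_min le_rfl (by linarith [monotone_prefixSup hP huv]))
  have hUm : Monotone U := fun u v huv =>
    max_le_max le_rfl (min_le_min le_rfl (by linarith [monotone_suffixInf hP huv]))
  have hLU (u : I) : L u ≤ U u :=
    max_le_max le_rfl (min_le_min le_rfl (by linarith [hinc.prefixSup_le_suffixInf_add u]))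
  have hL (u : I) : |P u - L u| ≤ δ := abs_sub_max_min_le (hrange u)
    (abs_le.mpr ⟨by linarith [hinc.prefixSup_le_add u], by linarith [le_prefixSup hP u]⟩)
  have hU (u : I) : |P u - U u| ≤ δ := abs_sub_max_min_le (hrange u)
    (abs_le.mpr ⟨by linarith [suffixInf_le hP u], by linarith [hinc.le_suffixInf_add u]⟩)
  have hL0 : L 0 = a := by
    have : prefixSup P 0 ≤ P 0 := prefixSup_le fun s hs => (le_antisymm hs nonneg') ▸ le_rfl
    exact max_eq_left ((min_le_right _ _).trans (by linarith [(abs_le.mp h0).2]))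
  have hU1 : U 1 = b := by
    have : P 1 ≤ suffixInf P 1 := le_suffixInf fun s hs => (le_antisymm le_one' hs) ▸ le_rfl
    rw [show U 1 = max a (min b _) from rfl, min_eq_left (by linarith [(abs_le.mp h1).1]),
      max_eq_right hab]
  refine ⟨fun u => max (L u) (min (U u) (segCurve a b u)),
    hLc.max (hUc.min (continuous_segCurve a b)), hLm.max (hUm.min (monotone_segCurve hab)),
    ?_, ?_, fun u => ?_⟩
  · simp only [hL0, segCurve_zero]
    exact max_eq_left (min_le_right _ _)
  · simp only [hU1, segCurve_one, min_self]
    exact max_eq_right (max_le hab (min_le_left _ _))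
  · have hlo : L u ≤ max (L u) (min (U u) (segCurve a b u)) := le_max_left _ _
    have hhi : max (L u) (min (U u) (segCurve a b u)) ≤ U u := max_le (hLU u) (min_le_left _ _)
    rw [Real.dist_eq, abs_le]
    constructor <;> linarith [abs_le.mp (hL u), abs_le.mp (hU u)]

end FitsSegment

theorem frechetDist_le_segment_iff_general (δ : ℝ) (a b : ℝ) (hab : a ≤ b)
    (P : unitInterval → ℝ) (hP : Continuous P) :
    frechetDist P (segCurve a b) ≤ δ ↔
      (ApproxInc (2 * δ) P ∧
        |P 0 - a| ≤ δ ∧ |P 1 - b| ≤ δ ∧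
        ∀ t : unitInterval, P t ∈ Set.Icc (a - δ) (b + δ)) := by
  show _ ↔ FitsSegment δ a b P
  constructor
  · refine fun hd => FitsSegment.of_forall_lt fun r hr => ?_
    obtain ⟨f, g, hfm, hfs, hgm, hgs, hfg⟩ :=
      exists_forall_dist_lt_of_frechetDist_lt hP (continuous_segCurve a b) (hd.trans_lt hr)
    exact .of_forall_dist_le hab hfm hfs hgm hgs fun t => (hfg t).le
  · intro hfit
    obtain ⟨h, hc, hm, h0, h1, hdist⟩ := hfit.exists_monotone_dist_le hP hab
    obtain ⟨g, hgc, hgm, hgs, hg⟩ := exists_reparam_segCurve_eq hc hm h0 h1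
    exact frechetDist_le_of_forall_dist_le continuous_id monotone_id surjective_id hgc hgm hgs
      fun t => by simpa only [id, hg] using hdist t

/-- For a directed segment `Q` from `a` to `b` with `a ≤ b` and a
continuous curve `P : [0,1] → ℝ`, `d_F(P,Q) ≤ δ` iff `P` is `2δ`-monotone
increasing, endpoints match within `δ`, and `P ⊆ [a - δ, b + δ]`. -/
theorem frechetDist_le_segment_iff (δ : ℝ) (hδ : 0 < δ) (a b : ℝ) (hab : a ≤ b)
    (P : unitInterval → ℝ) (hP : Continuous P) :
    frechetDist P (segCurve a b) ≤ δ ↔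
      (ApproxInc (2 * δ) P ∧
        |P 0 - a| ≤ δ ∧ |P 1 - b| ≤ δ ∧
        ∀ t : unitInterval, P t ∈ Set.Icc (a - δ) (b + δ)) :=
  frechetDist_le_segment_iff_general δ a b hab P hP
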